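/- arXiv:1309.0259 — 6 statements merged into one kernel-verified Lean document; each statement's English description precedes it below -/
import Mathlib

section
/- For every n ≥ 3, the cycle C_n on n vertices has minimum L(2,1)-labeling span λ(C_n) = 4. -/
open SimpleGraph

/-- An `L(2,1)`-labeling of `G`: adjacent vertices get labels differing by at least 2,
vertices at distance 2 get labels differing by at least 1. -/
def IsL21 {V : Type*} (G : SimpleGraph V) (f : V → ℤ) : Prop :=
  (∀ x y, G.Adj x y → 2 ≤ |f x - f y|) ∧ (∀ x y, G.dist x y = 2 → 1 ≤ |f x - f y|)

/-- The span of a labeling: the largest label minus the smallest label. -/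
def labelSpan {V : Type*} [Fintype V] (f : V → ℤ) : ℕ :=
  Finset.univ.sup fun p : V × V => (f p.1 - f p.2).toNat

/-- `λ(G)`: the minimum span over all `L(2,1)`-labelings of `G`. -/
noncomputable def lambda21 {V : Type*} [Fintype V] (G : SimpleGraph V) : ℕ :=
  sInf {s | ∃ f : V → ℤ, IsL21 G f ∧ labelSpan f = s}

section labelSpan

variable {V : Type*} [Fintype V]

theorem sub_le_labelSpan (f : V → ℤ) (x y : V) : f x - f y ≤ labelSpan f := by
  have : (f x - f y).toNat ≤ labelSpan f :=
    Finset.le_sup (f := fun p : V × V => (f p.1 - f p.2).toNat) (Finset.mem_univ (x, y))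
  omega

theorem labelSpan_eq_of_sub_le {f : V → ℤ} {s : ℕ} (hle : ∀ x y, f x - f y ≤ s) {x₀ y₀ : V}
    (hs : f x₀ - f y₀ = s) : labelSpan f = s := by
  refine le_antisymm (Finset.sup_le fun p _ => ?_) ?_
  · have := hle p.1 p.2
    omega
  · have := sub_le_labelSpan f x₀ y₀
    omega

end labelSpan

theorem lambda21_eq_of_exists_of_forall {V : Type*} [Fintype V] {G : SimpleGraph V} {s : ℕ}
    (hex : ∃ f, IsL21 G f ∧ labelSpan f = s) (hle : ∀ f, IsL21 G f → s ≤ labelSpan f) :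
    lambda21 G = s :=
  le_antisymm (Nat.sInf_le hex) (le_csInf ⟨s, hex⟩ fun _ ⟨f, hf, hfs⟩ => hfs ▸ hle f hf)

namespace IsL21

variable {V : Type*} {G : SimpleGraph V} {f : V → ℤ}

theorem ne_of_adj_of_adj (hf : IsL21 G f) {x y z : V} (hxy : G.Adj x y) (hyz : G.Adj y z)
    (hxz : x ≠ z) : f x ≠ f z := by
  by_cases hadj : G.Adj x z
  · have := hf.1 x z hadj
    rw [le_abs] at this
    omega
  · have hdist : G.dist x z = 2 := by
      rw [SimpleGraph.dist, edist_eq_two_iff.2 ⟨hxz, hadj, ⟨y, hxy, hyz.symm⟩⟩]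
      rfl
    have := hf.2 x z hdist
    rw [le_abs] at this
    omega

theorem of_adj_of_adj (hadj : ∀ x y, G.Adj x y → 2 ≤ |f x - f y|)
    (hcommon : ∀ x y z, G.Adj x y → G.Adj y z → x ≠ z → f x ≠ f z) : IsL21 G f := by
  refine ⟨hadj, fun x z hdist => ?_⟩
  have hedist : G.edist x z = 2 := by
    rw [SimpleGraph.dist, ENat.toNat_eq_iff two_ne_zero] at hdist
    exact hdist
  obtain ⟨hxz, -, y, hxy, hzy⟩ := edist_eq_two_iff.1 hedist
  have := hcommon x y z hxy hzy.symm hxz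
  rw [le_abs]
  omega

/-- With labels in `[m, m + 3]`, a vertex labelled `m` has both neighbours in `{m + 2, m + 3}`,
one of them, `x`, labelled `m + 2`; a second neighbour of `x` is within distance two of
the first vertex, so its label lies in `[m + 1, m + 3]`, too close to `m + 2`. -/
theorem four_le_labelSpan [Fintype V] [DecidableRel G.Adj] (hG : 2 ≤ G.minDegree)
    (hf : IsL21 G f) : 4 ≤ labelSpan f := by
  have : Nonempty V := by
    by_contra h
    rw [not_nonempty_iff] at h
    simp [minDegree_of_subsingleton] at hG
  have exists_adj_ne : ∀ v u, ∃ w, G.Adj v w ∧ w ≠ u := fun v u => by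
    obtain ⟨a, ha, b, hb, hab⟩ := Finset.one_lt_card.1 (hG.trans (G.minDegree_le_degree v))
    rw [mem_neighborFinset] at ha hb
    by_cases hau : a = u
    · exact ⟨b, hb, hau ▸ hab.symm⟩
    · exact ⟨a, ha, hau⟩
  obtain ⟨v, -, hv⟩ := Finset.exists_min_image Finset.univ f Finset.univ_nonempty
  by_contra! hspan
  have hle : ∀ x, f x ≤ f v + 3 := fun x => by
    have := sub_le_labelSpan f x v
    omega
  have two_le_of_adj : ∀ x, G.Adj v x → f v + 2 ≤ f x := fun x hvx => by
    have h := hf.1 v x hvx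
    have := hv x (Finset.mem_univ x)
    rw [le_abs] at h
    omega
  obtain ⟨x, hvx, hx⟩ : ∃ x, G.Adj v x ∧ f x = f v + 2 := by
    obtain ⟨u, hvu, -⟩ := exists_adj_ne v v
    obtain ⟨w, hvw, hwu⟩ := exists_adj_ne v u
    have := hf.ne_of_adj_of_adj hvu.symm hvw hwu.symm
    have := hle u
    have := hle w
    have := two_le_of_adj u hvu
    have := two_le_of_adj w hvw
    by_cases hu : f u = f v + 2
    · exact ⟨u, hvu, hu⟩
    · exact ⟨w, hvw, by omega⟩
  obtain ⟨y, hxy, hyv⟩ := exists_adj_ne x v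
  have hvy := hf.ne_of_adj_of_adj hvx hxy hyv.symm
  have hxy' := hf.1 x y hxy
  have := hv y (Finset.mem_univ y)
  have := hle y
  rw [le_abs] at hxy'
  omega

end IsL21

theorem two_le_minDegree_cycleGraph {n : ℕ} (hn : 3 ≤ n) : 2 ≤ (cycleGraph n).minDegree := by
  obtain ⟨k, rfl⟩ : ∃ k, n = k + 3 := ⟨n - 3, by omega⟩
  exact le_minDegree_of_forall_le_degree _ _ fun _ => cycleGraph_degree_three_le.ge

theorem cycleGraph_adj_iff_eq_add_one {n : ℕ} {x y : Fin (n + 2)} :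
    (cycleGraph (n + 2)).Adj x y ↔ x = y + 1 ∨ y = x + 1 := by
  rw [cycleGraph_adj, sub_eq_iff_eq_add, sub_eq_iff_eq_add, add_comm 1 y, add_comm 1 x]

theorem isL21_cycleGraph_of_forall {n : ℕ} {f : Fin (n + 2) → ℤ}
    (hadj : ∀ i, 2 ≤ |f (i + 1) - f i|) (hdist : ∀ i, f (i + 1 + 1) ≠ f i) :
    IsL21 (cycleGraph (n + 2)) f := by
  refine IsL21.of_adj_of_adj (fun x y hxy => ?_) (fun x y z hxy hyz hxz => ?_)
  · rcases cycleGraph_adj_iff_eq_add_one.1 hxy with rfl | rfl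
    · exact hadj y
    · exact abs_sub_comm (f x) _ ▸ hadj x
  · rcases cycleGraph_adj_iff_eq_add_one.1 hxy with rfl | rfl <;>
      rcases cycleGraph_adj_iff_eq_add_one.1 hyz with h | h
    · rw [h]
      exact hdist z
    · exact absurd h.symm hxz
    · exact absurd (add_right_cancel h) hxz
    · rw [h]
      exact (hdist x).symm

/-- The labels `0, 2, 4` repeated around the cycle; when `n ≡ 1 (mod 3)` the last block
becomes `0, 3, 1, 4`, and when `n ≡ 2 (mod 3)` the labels `1, 3` are appended. -/
def cycleLabel (n m : ℕ) : ℤ :=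
  if n % 3 = 1 then
    if m + 3 = n then 3 else if m + 2 = n then 1 else if m + 1 = n then 4 else 2 * (m % 3)
  else if n % 3 = 2 then
    if m + 2 = n then 1 else if m + 1 = n then 3 else 2 * (m % 3)
  else 2 * (m % 3)

theorem exists_isL21_cycleGraph_labelSpan_eq_four {n : ℕ} (hn : 3 ≤ n) :
    ∃ f : Fin n → ℤ, IsL21 (cycleGraph n) f ∧ labelSpan f = 4 := by
  obtain ⟨k, rfl⟩ : ∃ k, n = k + 3 := ⟨n - 3, by omega⟩
  refine ⟨fun i => cycleLabel (k + 3) i,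
    isL21_cycleGraph_of_forall (fun i => ?_) (fun i => ?_), ?_⟩
  · rw [Fin.val_add_one, le_abs]
    simp only [Fin.ext_iff, Fin.val_last]
    unfold cycleLabel
    split_ifs <;> omega
  · simp only [Fin.val_add_one, Fin.ext_iff, Fin.val_last]
    unfold cycleLabel
    split_ifs <;> omega
  · have bounds : ∀ m, 0 ≤ cycleLabel (k + 3) m ∧ cycleLabel (k + 3) m ≤ 4 := fun m => by
      unfold cycleLabel
      split_ifs <;> omega
    refine labelSpan_eq_of_sub_le (fun x y => ?_)
      (x₀ := ⟨if (k + 3) % 3 = 1 then k + 2 else 2, by split_ifs <;> omega⟩) (y₀ := 0) ?_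
    · have := bounds x
      have := bounds y
      omega
    · simp only [Fin.val_zero]
      unfold cycleLabel
      split_ifs <;> omega

theorem lambda21_cycleGraph (n : ℕ) (hn : 3 ≤ n) :
    lambda21 (SimpleGraph.cycleGraph n) = 4 :=
  lambda21_eq_of_exists_of_forall (exists_isL21_cycleGraph_labelSpan_eq_four hn)
    fun _ hf => hf.four_le_labelSpan (two_le_minDegree_cycleGraph hn)
end

section
/- Every simple graph G with maximum degree Δ has an L(2,1)-labeling with span at most Δ² + Δ, i.e. λ(G) ≤ Δ² + Δ. -/
open SimpleGraph

/-! Chang–Kuo: build layers `S₀, S₁, …`, where `Sᵢ` is a maximal set of vertices at pairwise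
distance `> 2` among the vertices not yet labelled and not adjacent to `Sᵢ₋₁`, and give the
vertices of `Sᵢ` the label `i`. Consecutive labels are then never adjacent, and equal labels are
at distance `> 2`. A vertex `v` left unlabelled by step `i` was blocked there either by a
neighbour in `Sᵢ₋₁` or by a vertex of `Sᵢ` within distance 2. The layers are disjoint, so the
first happens for at most `Δ` steps and the second for at most `Δ²` steps: every vertex is
labelled by step `Δ² + Δ`. -/

open Finset

theorem Finset.card_filter_inter_nonempty_le {ι α : Type*} [DecidableEq α] {s : Finset ι}
    {S : ι → Finset α} (hS : (s : Set ι).PairwiseDisjoint S) (t : Finset α) :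
    #{i ∈ s | (S i ∩ t).Nonempty} ≤ #t := by
  calc #{i ∈ s | (S i ∩ t).Nonempty}
      = ∑ i ∈ s with (S i ∩ t).Nonempty, 1 := card_eq_sum_ones _
    _ ≤ ∑ i ∈ s with (S i ∩ t).Nonempty, #(S i ∩ t) :=
        sum_le_sum fun i hi => card_pos.2 (mem_filter.1 hi).2
    _ = #((s.filter fun i => (S i ∩ t).Nonempty).biUnion fun i => S i ∩ t) :=
        (card_biUnion fun i hi j hj hij =>
          ((hS (mem_filter.1 hi).1 (mem_filter.1 hj).1 hij).mono inter_subset_left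
            inter_subset_left)).symm
    _ ≤ #t := card_le_card (biUnion_subset.2 fun _ _ => inter_subset_right)

namespace SimpleGraph

variable {V : Type*} (G : SimpleGraph V)

def IsTwoPacking (S : Finset V) : Prop :=
  (S : Set V).Pairwise fun u v => 2 < G.edist u v

lemma exists_isTwoPacking_maximal [Finite V] [DecidableEq V] (p : V → Prop) :
    ∃ S : Finset V, (∀ v ∈ S, p v) ∧ G.IsTwoPacking S ∧
      ∀ v, p v → v ∉ S → ∃ u ∈ S, G.edist v u ≤ 2 := by
  obtain ⟨S, -, ⟨hSp, hS⟩, hmax⟩ := Finite.exists_le_maximal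
    (p := fun S : Finset V => (∀ v ∈ S, p v) ∧ G.IsTwoPacking S) (a := ∅) (by simp [IsTwoPacking])
  refine ⟨S, hSp, hS, fun v hv hvS => ?_⟩
  by_contra! hfar
  have hins : G.IsTwoPacking (insert v S) := by
    rw [IsTwoPacking, coe_insert, Set.pairwise_insert]
    exact ⟨hS, fun u hu _ => ⟨hfar u hu, G.edist_comm ▸ hfar u hu⟩⟩
  exact hvS (hmax ⟨forall_mem_insert _ _ _ |>.2 ⟨hv, hSp⟩, hins⟩ (subset_insert v S)
    (mem_insert_self v S))

lemma isL21_of_isTwoPacking_layers {L : ℕ → Finset V} {f : V → ℕ}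
    (hpack : ∀ i, G.IsTwoPacking (L i)) (hsucc : ∀ i, ∀ u ∈ L (i + 1), ∀ v ∈ L i, ¬ G.Adj u v)
    (hf : ∀ v, v ∈ L (f v)) : IsL21 G fun v => (f v : ℤ) := by
  have hne : ∀ {x y : V}, x ≠ y → G.edist x y ≤ 2 → f x ≠ f y := fun {x y} hxy hle heq =>
    (hpack (f x) (hf x) (heq ▸ hf y) hxy).not_ge hle
  refine ⟨fun x y hxy => ?_, fun x y hxy => ?_⟩
  · have hxy' : f x ≠ f y := hne hxy.ne (by rw [edist_eq_one_iff_adj.2 hxy]; norm_num)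
    have hx : f x ≠ f y + 1 := fun h => hsucc _ x (h ▸ hf x) y (hf y) hxy
    have hy : f y ≠ f x + 1 := fun h => hsucc _ y (h ▸ hf y) x (hf x) hxy.symm
    dsimp only
    rw [le_abs']
    omega
  · have hxy' : x ≠ y := by rintro rfl; simp at hxy
    have := hne hxy' ((ENat.toNat_eq_iff two_ne_zero).1 hxy).le
    dsimp only
    rw [le_abs']
    omega

section

variable [Finite V] [DecidableEq V]

/-- The layer `Sᵢ`; adjacency to `Sᵢ₋₁` is phrased through `j + 1 = i` to avoid truncated
subtraction at `i = 0`. -/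
noncomputable def layer (i : ℕ) : Finset V :=
  (G.exists_isTwoPacking_maximal
    fun v => ∀ j < i, v ∉ layer j ∧ (j + 1 = i → ∀ u ∈ layer j, ¬ G.Adj v u)).choose
termination_by i

lemma layer_spec (i : ℕ) :
    (∀ v ∈ G.layer i, ∀ j < i, v ∉ G.layer j ∧ (j + 1 = i → ∀ u ∈ G.layer j, ¬ G.Adj v u)) ∧
    G.IsTwoPacking (G.layer i) ∧
    ∀ v, (∀ j < i, v ∉ G.layer j ∧ (j + 1 = i → ∀ u ∈ G.layer j, ¬ G.Adj v u)) →
      v ∉ G.layer i → ∃ u ∈ G.layer i, G.edist v u ≤ 2 := by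
  rw [layer]
  exact (G.exists_isTwoPacking_maximal _).choose_spec

lemma pairwise_disjoint_layer : Pairwise (Function.onFun Disjoint G.layer) := by
  intro i j hij
  rcases hij.lt_or_gt with h | h
  · exact Finset.disjoint_left.2 fun v hi hj => ((G.layer_spec j).1 v hj i h).1 hi
  · exact Finset.disjoint_right.2 fun v hj hi => ((G.layer_spec i).1 v hi j h).1 hj

lemma not_adj_of_mem_layer_succ {i : ℕ} {u v : V} (hu : u ∈ G.layer (i + 1))
    (hv : v ∈ G.layer i) : ¬ G.Adj u v :=
  ((G.layer_spec (i + 1)).1 u hu i i.lt_succ_self).2 rfl v hv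

lemma isTwoPacking_layer (i : ℕ) : G.IsTwoPacking (G.layer i) :=
  (G.layer_spec i).2.1

lemma exists_mem_layer_edist_le_two {i : ℕ} {v : V} (hv : ∀ j ≤ i, v ∉ G.layer j)
    (hadj : ∀ j, j + 1 = i → ∀ u ∈ G.layer j, ¬ G.Adj v u) :
    ∃ u ∈ G.layer i, G.edist v u ≤ 2 :=
  (G.layer_spec i).2.2 v (fun j hj => ⟨hv j hj.le, hadj j⟩) (hv i le_rfl)

end

variable [Fintype V] [DecidableRel G.Adj]

lemma card_filter_edist_le_two_le [DecidableEq V] (v : V) :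
    #{u | u ≠ v ∧ G.edist v u ≤ 2} ≤ G.maxDegree ^ 2 := by
  calc #{u | u ≠ v ∧ G.edist v u ≤ 2}
      ≤ #((G.neighborFinset v).biUnion fun w => insert w ((G.neighborFinset w).erase v)) := by
        refine card_le_card fun u hu => ?_
        obtain ⟨huv, hle⟩ := (mem_filter.1 hu).2
        have : G.Adj v u ∨ (G.commonNeighbors v u).Nonempty := by
          by_contra! h
          exact hle.not_gt (two_lt_edist_iff.2 ⟨huv.symm, h.1, h.2⟩)
        rcases this with hvu | ⟨w, hw⟩
        · exact mem_biUnion.2 ⟨u, by simpa, mem_insert_self _ _⟩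
        · rw [mem_commonNeighbors] at hw
          exact mem_biUnion.2 ⟨w, by simpa using hw.1,
            mem_insert_of_mem (mem_erase.2 ⟨huv, by simpa using hw.2.symm⟩)⟩
    _ ≤ #(G.neighborFinset v) * G.maxDegree := by
        refine card_biUnion_le_card_mul _ _ _ fun w hw => ?_
        have hv : v ∈ G.neighborFinset w := by simpa [adj_comm] using hw
        have := card_erase_add_one hv
        have := G.card_neighborFinset_eq_degree w ▸ G.degree_le_maxDegree w
        have := card_insert_le w ((G.neighborFinset w).erase v)
        omega
    _ ≤ G.maxDegree ^ 2 := by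
        rw [card_neighborFinset_eq_degree, sq]
        exact Nat.mul_le_mul_right _ (G.degree_le_maxDegree v)

lemma exists_mem_layer_le [DecidableEq V] (v : V) :
    ∃ i ≤ G.maxDegree ^ 2 + G.maxDegree, v ∈ G.layer i := by
  set N := G.maxDegree ^ 2 + G.maxDegree
  set B : Finset V := {u | u ≠ v ∧ G.edist v u ≤ 2}
  by_contra! hv
  have hcover : range (N + 1) ⊆ {i ∈ range (N + 1) | (G.layer i ∩ B).Nonempty} ∪
      {j ∈ range (N + 1) | (G.layer j ∩ G.neighborFinset v).Nonempty}.image (· + 1) := by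
    intro i hi
    have hiN := Nat.lt_succ_iff.1 (mem_range.1 hi)
    by_cases hadj : ∀ j, j + 1 = i → ∀ u ∈ G.layer j, ¬ G.Adj v u
    · obtain ⟨u, hu, hvu⟩ := G.exists_mem_layer_edist_le_two
        (fun j hj hvj => hv j (hj.trans hiN) hvj) hadj
      have huv : u ≠ v := by rintro rfl; exact hv i hiN hu
      exact mem_union_left _ (mem_filter.2 ⟨hi, u, mem_inter.2 ⟨hu, by simp [B, huv, hvu]⟩⟩)
    · push Not at hadj
      obtain ⟨j, rfl, u, hu, hvu⟩ := hadj
      exact mem_union_right _ (mem_image_of_mem _ (mem_filter.2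
        ⟨mem_range.2 (by omega), u, mem_inter.2 ⟨hu, by simpa using hvu⟩⟩))
  have hdisj : ((range (N + 1) : Finset ℕ) : Set ℕ).PairwiseDisjoint G.layer :=
    G.pairwise_disjoint_layer.set_pairwise _
  have : N + 1 ≤ N := calc
    N + 1 = #(range (N + 1)) := (card_range _).symm
    _ ≤ #{i ∈ range (N + 1) | (G.layer i ∩ B).Nonempty} +
        #({j ∈ range (N + 1) | (G.layer j ∩ G.neighborFinset v).Nonempty}.image (· + 1)) :=
      (card_le_card hcover).trans (card_union_le _ _)
    _ ≤ #B + #(G.neighborFinset v) :=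
      add_le_add (card_filter_inter_nonempty_le hdisj B)
        (card_image_le.trans (card_filter_inter_nonempty_le hdisj _))
    _ ≤ N := add_le_add (G.card_filter_edist_le_two_le v)
      (G.card_neighborFinset_eq_degree v ▸ G.degree_le_maxDegree v)
  omega

end SimpleGraph

lemma labelSpan_le {V : Type*} [Fintype V] {f : V → ℤ} {n : ℕ} (h₀ : ∀ v, 0 ≤ f v)
    (hn : ∀ v, f v ≤ n) : labelSpan f ≤ n :=
  Finset.sup_le fun p _ => by have := h₀ p.2; have := hn p.1; omega

lemma lambda21_le_labelSpan {V : Type*} [Fintype V] {G : SimpleGraph V} {f : V → ℤ}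
    (hf : IsL21 G f) : lambda21 G ≤ labelSpan f :=
  Nat.sInf_le ⟨f, hf, rfl⟩

theorem lambda21_le_maxDegree_sq_add_maxDegree {V : Type*} [Fintype V] (G : SimpleGraph V)
    [DecidableRel G.Adj] :
    lambda21 G ≤ G.maxDegree ^ 2 + G.maxDegree := by
  classical
  choose f hf_le hf_mem using G.exists_mem_layer_le
  calc lambda21 G ≤ labelSpan fun v => (f v : ℤ) :=
        lambda21_le_labelSpan <| G.isL21_of_isTwoPacking_layers G.isTwoPacking_layer
          (fun _ _ hu _ hv => G.not_adj_of_mem_layer_succ hu hv) hf_mem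
    _ ≤ G.maxDegree ^ 2 + G.maxDegree :=
      labelSpan_le (fun v => Int.natCast_nonneg _) fun v => by exact_mod_cast hf_le v
end

section
/- Every simple graph G with maximum degree Δ has an L(2,1)-labeling with span at most Δ² + 2Δ. -/
/-!
Label the vertices one at a time. When a vertex `v` is labelled, each of its at most
`Δ` neighbours blocks three labels and each of the at most `Δ(Δ - 1)` other vertices sharing a
neighbour with `v` blocks one, so at most `Δ² + 2Δ` of the `Δ² + 2Δ + 1` labels `0, …, Δ² + 2Δ`
are blocked and a free one remains.
-/

open SimpleGraph

open Finset

lemma labelSpan_le_of_forall_mem_Icc {V : Type*} [Fintype V] {f : V → ℤ} {a b : ℤ}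
    (hf : ∀ v, f v ∈ Icc a b) : labelSpan f ≤ (b - a).toNat :=
  Finset.sup_le fun p _ => by
    have h₁ := mem_Icc.mp (hf p.1)
    have h₂ := mem_Icc.mp (hf p.2)
    omega

namespace SimpleGraph

variable {V : Type*} {G : SimpleGraph V}

/-- Used only for `x ≠ y`, where having a common neighbour means being at distance at most 2. -/
def L21Separated (G : SimpleGraph V) (f : V → ℤ) (x y : V) : Prop :=
  (G.Adj x y → 2 ≤ |f x - f y|) ∧ ((G.commonNeighbors x y).Nonempty → f x ≠ f y)

lemma L21Separated.symm {f : V → ℤ} {x y : V} (h : G.L21Separated f x y) :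
    G.L21Separated f y x :=
  ⟨fun hyx => abs_sub_comm (f x) (f y) ▸ h.1 hyx.symm,
    fun hc => (h.2 (G.commonNeighbors_symm y x ▸ hc)).symm⟩

lemma isL21_of_pairwise_l21Separated {f : V → ℤ} (h : Pairwise (G.L21Separated f)) :
    IsL21 G f := by
  refine ⟨fun x y hxy => (h hxy.ne).1 hxy, fun x y hd => ?_⟩
  have hr : G.Reachable x y := Reachable.of_dist_ne_zero (by omega)
  obtain ⟨hne, -, hc⟩ := G.edist_eq_two_iff.mp (by rw [← hr.coe_dist_eq_edist, hd]; rfl)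
  exact Int.one_le_abs (sub_ne_zero.mpr ((h hne).2 hc))

variable [Fintype V] [DecidableRel G.Adj] [DecidableEq V]

variable (G) in
def secondNeighborFinset (v : V) : Finset V :=
  (G.neighborFinset v).biUnion fun w => (G.neighborFinset w).erase v

lemma mem_secondNeighborFinset {u v : V} :
    u ∈ G.secondNeighborFinset v ↔ u ≠ v ∧ (G.commonNeighbors v u).Nonempty := by
  simp only [secondNeighborFinset, mem_biUnion, mem_erase, mem_neighborFinset, Set.Nonempty,
    mem_commonNeighbors, G.adj_comm u]
  tauto

lemma card_secondNeighborFinset_le (v : V) :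
    #(G.secondNeighborFinset v) ≤ G.maxDegree * (G.maxDegree - 1) := by
  have hdeg : #(G.neighborFinset v) ≤ G.maxDegree :=
    (G.card_neighborFinset_eq_degree v).trans_le (G.degree_le_maxDegree v)
  refine (card_biUnion_le_card_mul _ _ _ fun w hw => ?_).trans (Nat.mul_le_mul_right _ hdeg)
  have hvw : v ∈ G.neighborFinset w := by
    rw [mem_neighborFinset] at hw ⊢
    exact hw.symm
  rw [card_erase_of_mem hvw, card_neighborFinset_eq_degree]
  exact Nat.sub_le_sub_right (G.degree_le_maxDegree w) 1

variable (G) in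
noncomputable def forbiddenLabels (f : V → ℤ) (v : V) : Finset ℤ :=
  (G.neighborFinset v).biUnion (fun u => Icc (f u - 1) (f u + 1)) ∪
    (G.secondNeighborFinset v).image f

lemma card_forbiddenLabels_le (f : V → ℤ) (v : V) :
    #(G.forbiddenLabels f v) ≤ G.maxDegree ^ 2 + 2 * G.maxDegree := by
  have hnbr : #((G.neighborFinset v).biUnion fun u => Icc (f u - 1) (f u + 1)) ≤
      G.maxDegree * 3 :=
    (card_biUnion_le_card_mul _ _ 3 fun u _ => by simp; omega).trans <| Nat.mul_le_mul_right _ <|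
      (G.card_neighborFinset_eq_degree v).trans_le (G.degree_le_maxDegree v)
  calc #(G.forbiddenLabels f v)
      ≤ G.maxDegree * 3 + G.maxDegree * (G.maxDegree - 1) :=
        (card_union_le _ _).trans <|
          add_le_add hnbr (card_image_le.trans (G.card_secondNeighborFinset_le v))
    _ = G.maxDegree ^ 2 + 2 * G.maxDegree := by
        rcases G.maxDegree with _ | d
        · simp
        · simp only [Nat.add_sub_cancel]; ring

lemma exists_mem_Icc_notMem_forbiddenLabels (f : V → ℤ) (v : V) :
    ∃ c ∈ Icc (0 : ℤ) (G.maxDegree ^ 2 + 2 * G.maxDegree : ℕ), c ∉ G.forbiddenLabels f v :=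
  exists_mem_notMem_of_card_lt_card <| by
    have := G.card_forbiddenLabels_le f v
    rw [Int.card_Icc]
    omega

lemma l21Separated_update_of_notMem_forbiddenLabels {f : V → ℤ} {v u : V} {c : ℤ}
    (hc : c ∉ G.forbiddenLabels f v) (hu : u ≠ v) :
    G.L21Separated (Function.update f v c) v u := by
  simp only [L21Separated, Function.update_self, Function.update_of_ne hu]
  simp only [forbiddenLabels, mem_union, mem_biUnion, mem_neighborFinset, mem_Icc, mem_image,
    mem_secondNeighborFinset, not_or, not_exists, not_and] at hc
  refine ⟨fun hvu => ?_, fun hvu h => hc.2 u ⟨hu, hvu⟩ h.symm⟩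
  have := hc.1 u hvu
  rw [le_abs]
  omega

lemma exists_forall_mem_Icc_pairwise_l21Separated (s : Finset V) :
    ∃ f : V → ℤ, (∀ v, f v ∈ Icc (0 : ℤ) (G.maxDegree ^ 2 + 2 * G.maxDegree : ℕ)) ∧
      (s : Set V).Pairwise (G.L21Separated f) := by
  induction s using Finset.induction_on with
  | empty => exact ⟨0, fun _ => by simp; positivity, by simp⟩
  | insert a s ha ih =>
    obtain ⟨f, hf, hs⟩ := ih
    obtain ⟨c, hcN, hc⟩ := G.exists_mem_Icc_notMem_forbiddenLabels f a
    refine ⟨Function.update f a c, fun v => ?_, ?_⟩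
    · rcases eq_or_ne v a with rfl | hv
      · simpa using hcN
      · simpa [hv] using hf v
    rw [coe_insert, Set.pairwise_insert_of_notMem (mod_cast ha)]
    refine ⟨fun x hx y hy hxy => ?_, fun b hb => ?_⟩
    · have hxa : x ≠ a := ne_of_mem_of_not_mem hx ha
      have hya : y ≠ a := ne_of_mem_of_not_mem hy ha
      simpa only [L21Separated, Function.update_of_ne hxa, Function.update_of_ne hya]
        using hs hx hy hxy
    · have h := l21Separated_update_of_notMem_forbiddenLabels hc (ne_of_mem_of_not_mem hb ha)
      exact ⟨h, h.symm⟩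

end SimpleGraph

theorem exists_L21_span_le_maxDegree_sq_add_two_maxDegree {V : Type*} [Fintype V]
    (G : SimpleGraph V) [DecidableRel G.Adj] :
    ∃ f : V → ℤ, IsL21 G f ∧ labelSpan f ≤ G.maxDegree ^ 2 + 2 * G.maxDegree := by
  classical
  obtain ⟨f, hf, hsep⟩ := G.exists_forall_mem_Icc_pairwise_l21Separated univ
  rw [coe_univ, Set.pairwise_univ] at hsep
  refine ⟨f, isL21_of_pairwise_l21Separated hsep, ?_⟩
  simpa only [sub_zero, Int.toNat_natCast] using labelSpan_le_of_forall_mem_Icc hf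
end

section
/- Let G be a simple graph on n ≥ 3 vertices. If for every integer k with 1 ≤ k ≤ (n−1)/2 the number of vertices of degree at most k is strictly less than k, then G contains a hamilton cycle. -/
/-!
Let `H ≥ G` be edge-maximal among the non-hamiltonian graphs on `V`. For a missing edge `xy`,
`H ⊔ xy` has a hamilton cycle, which must use `xy`, so `H` has a hamilton path from `x` to `y`.
If `x` were adjacent to the successor of a vertex `vᵢ` of this path that is adjacent to `y`, the
Pósa rotation `x … vᵢ y … vᵢ₊₁` would close up to a hamilton cycle of `H`; hence
`d(x) + d(y) ≤ n - 1`. Take the missing edge `xy` of maximal degree sum, with `d(x) ≤ d(y)`: then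
`k = d(x)` satisfies `2k < n`, and the `n - 1 - d(y) ≥ k` non-neighbours of `y` all have degree at
most `k`, in `H` and hence in `G`. The hypothesis at `k = 1` gives `k ≥ 1`, so this contradicts the
hypothesis at `k`.
-/

open SimpleGraph Finset

namespace SimpleGraph.Walk

variable {V : Type*} {G H : SimpleGraph V} {u v x y z : V}

lemma IsCycle.penultimate_tail {c : G.Walk u u} (hc : c.IsCycle) :
    c.tail.penultimate = c.penultimate := by
  have := hc.three_le_length
  simp only [penultimate, tail, drop_getVert, drop_length]
  congr 1
  omega

def posaRotation (p : G.Walk u v) (i : ℕ) (h : G.Adj (p.getVert i) v) :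
    G.Walk u (p.getVert (i + 1)) :=
  (p.take i).append (cons h (p.drop (i + 1)).reverse)

lemma support_posaRotation (p : G.Walk u v) (i : ℕ) (h : G.Adj (p.getVert i) v) :
    (p.posaRotation i h).support =
      p.support.take (i + 1) ++ (p.support.drop (i + 1)).reverse := by
  have hi : i < p.length := by
    by_contra! hi
    exact h.ne (p.getVert_of_length_le hi)
  simp [posaRotation, support_append, support_take, support_reverse, Nat.min_eq_left hi]

variable [DecidableEq V]

lemma IsHamiltonian.reverse {p : G.Walk u v} (hp : p.IsHamiltonian) : p.reverse.IsHamiltonian :=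
  fun w => by simpa [support_reverse, List.count_reverse] using hp w

lemma IsHamiltonian.transfer {p : G.Walk u v} (hp : p.IsHamiltonian)
    (hH : ∀ e ∈ p.edges, e ∈ H.edgeSet) : (p.transfer H hH).IsHamiltonian :=
  fun w => by simpa [support_transfer] using hp w

lemma IsHamiltonian.posaRotation {p : G.Walk u v} (hp : p.IsHamiltonian) (i : ℕ)
    (h : G.Adj (p.getVert i) v) : (p.posaRotation i h).IsHamiltonian := by
  have hperm : (p.posaRotation i h).support.Perm p.support := by
    rw [support_posaRotation]
    exact ((List.reverse_perm _).append_left _).trans (by rw [List.take_append_drop])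
  exact fun w => hperm.count_eq w ▸ hp w

lemma IsHamiltonian.isHamiltonianCycle_cons {p : G.Walk u v} (hp : p.IsHamiltonian)
    (h : G.Adj v u) (hlen : p.length ≠ 1) : (cons h p).IsHamiltonianCycle := by
  refine isHamiltonianCycle_iff_isCycle_and_support_count_tail_eq_one.mpr
    ⟨?_, fun w => by simpa using hp w⟩
  refine (cons_isCycle_iff p h).mpr ⟨hp.isPath, fun he => hlen ?_⟩
  exact hp.isPath.length_eq_one_of_mem_edges (Sym2.eq_swap ▸ he)

lemma IsHamiltonian.isHamiltonian_of_adj [Fintype V] {p : G.Walk u v} (hp : p.IsHamiltonian)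
    (h : G.Adj v u) (h3 : 3 ≤ Fintype.card V) : G.IsHamiltonian :=
  fun _ => ⟨v, cons h p, hp.isHamiltonianCycle_cons h (by rw [hp.length_eq]; omega)⟩

lemma IsHamiltonianCycle.reverse [Fintype V] {c : G.Walk u u} (hc : c.IsHamiltonianCycle) :
    c.reverse.IsHamiltonianCycle :=
  isHamiltonianCycle_iff_isCycle_and_length_eq.mpr ⟨hc.isCycle.reverse, by simp [hc.length_eq]⟩

lemma IsHamiltonianCycle.exists_isHamiltonian_of_sup_edge
    {c : (G ⊔ edge x y).Walk x x} (hc : c.IsHamiltonianCycle) (hz : c.snd = z)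
    (hy : y ≠ c.penultimate) : ∃ p : G.Walk x z, p.IsHamiltonian := by
  subst hz
  have hG : ∀ e ∈ c.tail.edges, e ∈ G.edgeSet := by
    intro e he
    refine (edgeSet_sup _ _ ▸ c.tail.edges_subset_edgeSet he).resolve_right fun hxy => hy ?_
    obtain rfl : e = s(x, y) := edgeSet_edge_subset hxy
    exact (hc.isPath_tail.eq_penultimate_of_mem_edges he).trans hc.isCycle.penultimate_tail
  exact ⟨(c.tail.transfer G hG).reverse, (hc.isHamiltonian_tail.transfer hG).reverse⟩

lemma IsHamiltonian.card_filter_getVert [Fintype V] {p : G.Walk u v} (hp : p.IsHamiltonian)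
    (P : V → Prop) [DecidablePred P] :
    #{i ∈ range (p.length + 1) | P (p.getVert i)} = #{w | P w} := by
  apply card_nbij p.getVert
  · intro i hi
    simp only [coe_filter, mem_range, Set.mem_ofPred_eq, mem_univ, true_and] at hi ⊢
    exact hi.2
  · intro i hi j hj hij
    simp only [coe_filter, mem_range, Set.mem_ofPred_eq] at hi hj
    exact hp.isPath.getVert_injOn (show i ≤ p.length by omega) (show j ≤ p.length by omega) hij
  · intro w hw
    obtain ⟨i, rfl, hi⟩ := mem_support_iff_exists_getVert.mp (hp.mem_support w)
    simp only [coe_filter, mem_univ, true_and, Set.mem_ofPred_eq] at hw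
    refine ⟨i, ?_, rfl⟩
    simp only [coe_filter, mem_range, Set.mem_ofPred_eq]
    exact ⟨by omega, hw⟩

lemma IsHamiltonian.degree_add_degree_lt [Fintype V] [DecidableRel G.Adj] {p : G.Walk u v}
    (hp : p.IsHamiltonian) (hG : ¬G.IsHamiltonian) (h3 : 3 ≤ Fintype.card V) :
    G.degree u + G.degree v < Fintype.card V := by
  have hlen : p.length + 1 = Fintype.card V := by rw [hp.length_eq]; omega
  set S := {i ∈ range p.length | G.Adj u (p.getVert (i + 1))}
  set T := {i ∈ range p.length | G.Adj (p.getVert i) v}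
  have hS : #S = G.degree u := by
    rw [← card_neighborFinset_eq_degree, neighborFinset_eq_filter,
      ← hp.card_filter_getVert, card_filter, card_filter, sum_range_succ']
    simp
  have hT : #T = G.degree v := by
    rw [← card_neighborFinset_eq_degree, neighborFinset_eq_filter,
      ← hp.card_filter_getVert, card_filter, card_filter, sum_range_succ]
    simp [G.adj_comm v]
  have hST : Disjoint S T := by
    refine disjoint_filter.mpr fun i _ hu hv => hG ?_
    exact (hp.posaRotation i hv).isHamiltonian_of_adj hu.symm h3
  calc G.degree u + G.degree v = #(S ∪ T) := by rw [card_union_of_disjoint hST, hS, hT]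
    _ ≤ #(range p.length) := card_le_card (union_subset (filter_subset _ _) (filter_subset _ _))
    _ < Fintype.card V := by rw [card_range]; omega

end SimpleGraph.Walk

namespace SimpleGraph

variable {V : Type*} [Fintype V] [DecidableEq V] {G : SimpleGraph V} {x y : V}

lemma isHamiltonian_top (h3 : 3 ≤ Fintype.card V) : (⊤ : SimpleGraph V).IsHamiltonian := by
  set l := (univ : Finset V).toList
  have hne : l ≠ [] := by
    rw [ne_eq, toList_eq_nil, ← card_eq_zero, card_univ]
    omega
  have hchain : l.IsChain (⊤ : SimpleGraph V).Adj :=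
    ((nodup_toList _).imp fun hab => hab).isChain
  have hp : (Walk.ofSupport l hne hchain).IsHamiltonian := fun w => by
    simpa [Walk.support_ofSupport] using List.count_eq_one_of_mem (nodup_toList _) (by simp)
  refine hp.isHamiltonian_of_adj (fun hEq => ?_) h3
  obtain ⟨x, hx⟩ := ((nodup_toList _).head_eq_getLast_iff hne).mp hEq.symm
  have : Fintype.card V = 1 := by simpa [l] using congrArg List.length hx
  omega

lemma exists_isHamiltonian_walk_of_isHamiltonian_sup_edge (hxy : x ≠ y) (hG : ¬G.IsHamiltonian)
    (hG' : (G ⊔ edge x y).IsHamiltonian) : ∃ p : G.Walk x y, p.IsHamiltonian := by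
  have : Nontrivial V := ⟨⟨x, y, hxy⟩⟩
  obtain ⟨c, hc⟩ := hG'.exists_isHamiltonianCycle x
  by_cases hpen : y = c.penultimate
  · refine hc.reverse.exists_isHamiltonian_of_sup_edge (by simp [hpen]) ?_
    simpa [hpen] using hc.isCycle.snd_ne_penultimate.symm
  by_cases hsnd : c.snd = y
  · exact hc.exists_isHamiltonian_of_sup_edge hsnd hpen
  obtain ⟨p, hp⟩ := hc.exists_isHamiltonian_of_sup_edge rfl hpen
  have hadj : G.Adj x c.snd := by
    have := c.adj_snd hc.not_nil
    simp only [sup_adj, edge_adj] at this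
    tauto
  exact (hG (hp.isHamiltonian_of_adj hadj.symm (hc.length_eq ▸ hc.three_le_length))).elim

lemma degree_add_degree_lt_of_maximal_not_isHamiltonian [DecidableRel G.Adj]
    (hG : Maximal (fun H : SimpleGraph V => ¬H.IsHamiltonian) G) (h3 : 3 ≤ Fintype.card V)
    (hxy : x ≠ y) (hadj : ¬G.Adj x y) : G.degree x + G.degree y < Fintype.card V := by
  have hG' : (G ⊔ edge x y).IsHamiltonian :=
    not_not.mp (hG.not_prop_of_gt (lt_sup_edge _ _ _ hxy hadj))
  obtain ⟨p, hp⟩ := exists_isHamiltonian_walk_of_isHamiltonian_sup_edge hxy hG.prop hG'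
  exact hp.degree_add_degree_lt hG.prop h3

lemma le_card_filter_degree_le [DecidableRel G.Adj] {k : ℕ}
    (hk : k + G.degree y < Fintype.card V) (hy : ∀ w, w ≠ y → ¬G.Adj w y → G.degree w ≤ k) :
    k ≤ #{w | G.degree w ≤ k} :=
  calc k ≤ Gᶜ.degree y := by rw [degree_compl]; omega
    _ = #(Gᶜ.neighborFinset y) := (card_neighborFinset_eq_degree _ _).symm
    _ ≤ #{w | G.degree w ≤ k} := card_le_card fun w hw => by
      rw [mem_neighborFinset, compl_adj] at hw
      simpa using hy w hw.1.symm fun h => hw.2 h.symm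

lemma exists_degree_le_card_filter_degree_le [DecidableRel G.Adj] (hG : G ≠ ⊤)
    (hOre : ∀ x y, x ≠ y → ¬G.Adj x y → G.degree x + G.degree y < Fintype.card V) :
    ∃ v, 2 * G.degree v < Fintype.card V ∧ G.degree v ≤ #{w | G.degree w ≤ G.degree v} := by
  obtain ⟨x, y, hxy, hadj⟩ := ne_top_iff_exists_not_adj.mp hG
  obtain ⟨⟨a, b⟩, hab, hmax⟩ := exists_max_image {q : V × V | q.1 ≠ q.2 ∧ ¬G.Adj q.1 q.2}
    (fun q => G.degree q.1 + G.degree q.2) ⟨(x, y), by simp [hxy, hadj]⟩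
  simp only [mem_filter, mem_univ, true_and] at hab hmax
  have hmax' : ∀ u w, u ≠ w → ¬G.Adj u w → G.degree u + G.degree w ≤ G.degree a + G.degree b :=
    fun u w huw huw' => hmax (u, w) ⟨huw, huw'⟩
  have hsum := hOre a b hab.1 hab.2
  rcases le_total (G.degree a) (G.degree b) with hle | hle
  · refine ⟨a, by omega, le_card_filter_degree_le (y := b) (by omega) fun w hw hwb => ?_⟩
    have := hmax' w b hw hwb
    omega
  · refine ⟨b, by omega, le_card_filter_degree_le (y := a) (by omega) fun w hw hwa => ?_⟩
    have := hmax' a w (Ne.symm hw) fun h => hwa h.symm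
    omega

end SimpleGraph

theorem posa_hamiltonian_cycle {V : Type*} [Fintype V] [DecidableEq V] (G : SimpleGraph V)
    [DecidableRel G.Adj] (n : ℕ) (hn : Fintype.card V = n) (h3 : 3 ≤ n)
    (h : ∀ k : ℕ, 1 ≤ k → 2 * k ≤ n - 1 →
      (Finset.univ.filter fun v => G.degree v ≤ k).card < k) :
    G.IsHamiltonian := by
  subst hn
  classical
  by_contra hG
  obtain ⟨H, hGH, hH⟩ :=
    Finite.exists_le_maximal (p := fun H : SimpleGraph V => ¬H.IsHamiltonian) hG
  have hne : H ≠ ⊤ := fun hH' => hH.prop (hH' ▸ isHamiltonian_top h3)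
  obtain ⟨v, hv, hcard⟩ := exists_degree_le_card_filter_degree_le hne
    fun x y => degree_add_degree_lt_of_maximal_not_isHamiltonian hH h3
  have hmono : ∀ k, #{w | H.degree w ≤ k} ≤ #{w | G.degree w ≤ k} := fun k =>
    card_le_card fun w => by
      simpa only [mem_filter, mem_univ, true_and] using (degree_le_of_le hGH).trans
  have hk : 1 ≤ H.degree v := by
    by_contra! h0
    have hv1 : v ∈ ({w | H.degree w ≤ 1} : Finset V) := by simp only [mem_filter, mem_univ, true_and]; omega
    have := (hmono 1).trans_lt (h 1 le_rfl (by omega))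
    have := card_pos.mpr ⟨v, hv1⟩
    omega
  exact (h _ hk (by omega)).not_ge (hcard.trans (hmono _))
end

section
/- If G is a simple graph on n vertices with minimum degree δ(G) ≥ (n−1)/2, then G has a hamilton path. -/
/-!
Take a longest path `u ⋯ v`. Every neighbour of `u` and of `v` lies on it, so if it misses
some vertex `w`, then its length is at most `n - 1 ≤ deg u + deg v`, and by pigeonhole there are
consecutive vertices `a, b` on the path with `a ~ v` and `b ~ u`. Then `u ⋯ a v ⋯ b u` is a cycle
through the vertices of the path. The degree bound also gives `w` a neighbour `x` on the path
(`w ~ u`, or `w` and `u` have a common neighbour), and opening the cycle at `x` and prepending `w`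
yields a longer path.
-/

open Finset

namespace List

variable {α : Type*}

theorem exists_eq_append_cons_cons_of_length_le_card_add_card [DecidableEq α] :
    ∀ {l : List α} {s t : Finset α}, l ≠ [] → (∀ a ∈ s, a ∈ l.dropLast) →
      (∀ b ∈ t, b ∈ l.tail) → l.length ≤ #s + #t →
      ∃ l₁ a b l₂, l = l₁ ++ a :: b :: l₂ ∧ a ∈ s ∧ b ∈ t
  | [], _, _, hne, _, _, _ => absurd rfl hne
  | [_], s, t, _, hs, ht, hlen => by
    simp only [dropLast_singleton, tail_cons, not_mem_nil] at hs ht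
    simp [eq_empty_of_forall_notMem hs, eq_empty_of_forall_notMem ht] at hlen
  | a :: b :: r, s, t, _, hs, ht, hlen => by
    by_cases hab : a ∈ s ∧ b ∈ t
    · exact ⟨[], a, b, r, rfl, hab⟩
    have hcard : #s + #t ≤ #(s.erase a) + #(t.erase b) + 1 := by
      have := pred_card_le_card_erase (s := s) (a := a)
      have := pred_card_le_card_erase (s := t) (a := b)
      by_cases ha : a ∈ s
      · rw [erase_eq_of_notMem fun hb => hab ⟨ha, hb⟩]; omega
      · rw [erase_eq_of_notMem ha]; omega
    obtain ⟨l₁, a', b', l₂, hr, ha', hb'⟩ := exists_eq_append_cons_cons_of_length_le_card_add_card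
      (s := s.erase a) (t := t.erase b) (cons_ne_nil b r)
      (fun x hx => by simpa [Finset.ne_of_mem_erase hx] using hs x (Finset.mem_of_mem_erase hx))
      (fun x hx => by simpa [Finset.ne_of_mem_erase hx] using ht x (Finset.mem_of_mem_erase hx))
      (by simp only [length_cons] at hlen ⊢; omega)
    exact ⟨a :: l₁, a', b', l₂, by simp [hr], Finset.mem_of_mem_erase ha',
      Finset.mem_of_mem_erase hb'⟩

variable {R : α → α → Prop}

theorem IsChain.exists_cons_isRotated {c : List α} (hc : c.IsChain R)
    (hclosed : ∀ y ∈ c.getLast?, ∀ z ∈ c.head?, R y z) {x : α} (hx : x ∈ c) :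
    ∃ m, (x :: m).IsChain R ∧ (x :: m) ~r c := by
  obtain ⟨c₁, c₂, rfl⟩ := append_of_mem hx
  obtain ⟨h₁, h₂, -⟩ := isChain_append.1 hc
  refine ⟨c₂ ++ c₁, isChain_append.2 ⟨h₂, h₁, fun y hy z hz => hclosed y ?_ z ?_⟩,
    (isRotated_append (l := c₁) (l' := x :: c₂)).symm⟩
  · exact mem_getLast?_append_of_mem_getLast? hy
  · exact mem_head?_append_of_mem_head? hz

theorem IsChain.append_cons_reverse [Std.Symm R] {l₁ l₂ : List α} {a b : α}
    (h : (l₁ ++ a :: b :: l₂).IsChain R) (ha : ∀ y ∈ (l₁ ++ a :: b :: l₂).getLast?, R a y) :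
    (l₁ ++ a :: (b :: l₂).reverse).IsChain R := by
  rw [← singleton_append, ← append_assoc] at h ha ⊢
  obtain ⟨h₁, h₂, -⟩ := isChain_append.1 h
  refine isChain_append.2 ⟨h₁, isChain_reverse.2 (h₂.imp fun _ _ h => symm h), ?_⟩
  intro x hx y hy
  rw [getLast?_append_cons, getLast?_singleton, Option.mem_some_iff] at hx
  rw [head?_reverse] at hy
  exact hx ▸ ha y (mem_getLast?_append_of_mem_getLast? hy)

theorem exists_nodup_isChain_forall_length_le [Fintype α] (R : α → α → Prop) :
    ∃ l : List α, l.Nodup ∧ l.IsChain R ∧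
      ∀ l' : List α, l'.Nodup → l'.IsChain R → l'.length ≤ l.length := by
  have hfin : {l : List α | l.Nodup ∧ l.IsChain R}.Finite :=
    (Set.finite_coe_iff.1 (inferInstance : Finite {l : List α // l.Nodup})).subset fun _ h => h.1
  obtain ⟨l, ⟨hnd, hl⟩, hmax⟩ := Set.exists_max_image _ length hfin ⟨[], nodup_nil, .nil⟩
  exact ⟨l, hnd, hl, fun l' hnd' hl' => hmax l' ⟨hnd', hl'⟩⟩

end List

namespace SimpleGraph

variable {V : Type*} {G : SimpleGraph V}

theorem exists_isHamiltonian_of_isChain [DecidableEq V] {l : List V} (hne : l ≠ [])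
    (hnd : l.Nodup) (hl : l.IsChain G.Adj) (hall : ∀ v, v ∈ l) :
    ∃ (u v : V) (p : G.Walk u v), p.IsHamiltonian :=
  ⟨_, _, .ofSupport l hne hl,
    (Walk.IsPath.mk' (by rwa [Walk.support_ofSupport])).isHamiltonian_of_mem
      (by simpa [Walk.support_ofSupport] using hall)⟩

theorem mem_of_adj_of_forall_length_le {l : List V} (hnd : l.Nodup) (hl : l.IsChain G.Adj)
    (hmax : ∀ l' : List V, l'.Nodup → l'.IsChain G.Adj → l'.length ≤ l.length) {u : V}
    (hu : u ∈ l.head? ∨ u ∈ l.getLast?) : ∀ y, G.Adj u y → y ∈ l := by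
  intro y huy
  by_contra hy
  rcases hu with hu | hu
  · refine absurd (hmax (y :: l) (hnd.cons hy) (hl.cons fun z hz => ?_)) (by simp)
    exact Option.mem_unique hu hz ▸ huy.symm
  · refine absurd (hmax (y :: l.reverse) ((List.nodup_reverse.2 hnd).cons (by simpa using hy))
      ((List.isChain_reverse.2 (hl.imp fun _ _ h => h.symm)).cons fun z hz => ?_)) (by simp)
    rw [List.head?_reverse] at hz
    exact Option.mem_unique hu hz ▸ huy.symm

theorem exists_adj_adj_of_card_le_degree_add_degree [Fintype V] [DecidableEq V]
    [DecidableRel G.Adj] {u w : V} (hne : u ≠ w) (hadj : ¬G.Adj u w)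
    (hcard : Fintype.card V ≤ G.degree u + G.degree w + 1) : ∃ x, G.Adj u x ∧ G.Adj w x := by
  by_contra! h
  have hdisj : Disjoint (G.neighborFinset u) (G.neighborFinset w) :=
    Finset.disjoint_left.2 fun x hux hwx => h x (by simpa using hux) (by simpa using hwx)
  have hsub : G.neighborFinset u ∪ G.neighborFinset w ⊆ (univ.erase u).erase w := by
    intro x hx
    rcases Finset.mem_union.1 hx with hx | hx <;> rw [mem_neighborFinset] at hx
    · simpa using ⟨fun h => hadj (h ▸ hx), hx.ne'⟩
    · simpa using ⟨hx.ne', fun h => hadj (h ▸ hx).symm⟩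
  have hdeg : G.degree u + G.degree w ≤ Fintype.card V - 1 - 1 := calc
    G.degree u + G.degree w = #(G.neighborFinset u ∪ G.neighborFinset w) := by
      rw [card_union_of_disjoint hdisj, card_neighborFinset_eq_degree,
        card_neighborFinset_eq_degree]
    _ ≤ #((univ.erase u).erase w) := card_le_card hsub
    _ = Fintype.card V - 1 - 1 := by
      rw [card_erase_of_mem (by simpa using hne.symm), card_erase_of_mem (mem_univ _), card_univ]
  have := Fintype.one_lt_card_iff.2 ⟨u, w, hne⟩
  omega

/-- The crossing edges `a ~ v` and `b ~ u` close `l = l₁ ++ a :: b :: l₂` into the cycle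
`l₁ ++ a :: reverse (b :: l₂)`, which can be opened at any of its vertices. -/
theorem exists_isChain_cons_perm_of_length_le_degree_add_degree [DecidableEq V]
    [G.LocallyFinite] {l : List V} {u v : V} (hl : l.IsChain G.Adj) (hu : l.head? = some u)
    (hv : l.getLast? = some v) (hNu : ∀ y, G.Adj u y → y ∈ l) (hNv : ∀ y, G.Adj v y → y ∈ l)
    (hlen : l.length ≤ G.degree u + G.degree v) {x : V} (hx : x ∈ l) :
    ∃ m, (x :: m).IsChain G.Adj ∧ (x :: m).Perm l := by
  obtain ⟨l₁, a, b, l₂, rfl, ha, hb⟩ := l.exists_eq_append_cons_cons_of_length_le_card_add_card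
    (s := G.neighborFinset v) (t := G.neighborFinset u) (by rintro rfl; simp at hu)
    (fun a ha => by
      rw [mem_neighborFinset] at ha
      exact List.mem_dropLast_of_mem_of_ne_getLast? (hNv a ha) (by simpa [hv] using ha.ne'))
    (fun b hb => by
      rw [mem_neighborFinset] at hb
      cases l with
      | nil => simp at hu
      | cons c l =>
        rw [List.head?_cons, Option.some_inj] at hu
        subst hu
        simpa [hb.ne'] using hNu b hb)
    (by simpa [add_comm] using hlen)
  rw [mem_neighborFinset] at ha hb
  have hperm : (l₁ ++ a :: (b :: l₂).reverse).Perm (l₁ ++ a :: b :: l₂) :=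
    ((List.reverse_perm _).cons a).append_left l₁
  have hc : (l₁ ++ a :: (b :: l₂).reverse).IsChain G.Adj := by
    have := G.symm
    refine hl.append_cons_reverse fun y hy => ?_
    rw [hv, Option.mem_some_iff] at hy
    exact hy ▸ ha.symm
  have hclosed : ∀ y ∈ (l₁ ++ a :: (b :: l₂).reverse).getLast?,
      ∀ z ∈ (l₁ ++ a :: (b :: l₂).reverse).head?, G.Adj y z := by
    intro y hy z hz
    rw [List.getLast?_append_of_ne_nil _ (List.cons_ne_nil _ _), ← List.singleton_append,
      List.getLast?_append_of_ne_nil _ (by simp), List.getLast?_reverse, List.head?_cons,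
      Option.mem_some_iff] at hy
    have hz : z = u := by cases l₁ <;> simp_all
    exact hy ▸ hz ▸ hb.symm
  obtain ⟨m, hm, hrot⟩ := hc.exists_cons_isRotated hclosed (hperm.mem_iff.2 hx)
  exact ⟨m, hm, hrot.perm.trans hperm⟩

end SimpleGraph

open SimpleGraph

theorem hamiltonian_path_of_minDegree {V : Type*} [Fintype V] [DecidableEq V] [Nonempty V]
    (G : SimpleGraph V) [DecidableRel G.Adj] (n : ℕ) (hn : Fintype.card V = n)
    (hδ : n - 1 ≤ 2 * G.minDegree) :
    ∃ (u v : V) (p : G.Walk u v), p.IsHamiltonian := by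
  obtain ⟨l, hnd, hl, hmax⟩ := List.exists_nodup_isChain_forall_length_le G.Adj
  have hne : l ≠ [] := by
    rintro rfl
    simpa using hmax [Classical.arbitrary V] (List.nodup_singleton _) (.singleton _)
  obtain ⟨u, hu⟩ := Option.ne_none_iff_exists'.1 (List.head?_eq_none_iff.not.2 hne)
  obtain ⟨v, hv⟩ := Option.ne_none_iff_exists'.1 (List.getLast?_eq_none_iff.not.2 hne)
  have hNu := mem_of_adj_of_forall_length_le hnd hl hmax (.inl hu)
  have hNv := mem_of_adj_of_forall_length_le hnd hl hmax (.inr hv)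
  refine exists_isHamiltonian_of_isChain hne hnd hl fun w => by_contra fun hw => ?_
  have hlen : l.length + 1 ≤ n := hn ▸ (hnd.cons hw).length_le_card
  have := G.minDegree_le_degree u
  have := G.minDegree_le_degree v
  have := G.minDegree_le_degree w
  obtain ⟨x, hxl, hwx⟩ : ∃ x ∈ l, G.Adj w x := by
    by_cases huw : G.Adj u w
    · exact ⟨u, List.mem_of_mem_head? hu, huw.symm⟩
    obtain ⟨x, hux, hwx⟩ := exists_adj_adj_of_card_le_degree_add_degree
      (by rintro rfl; exact hw (List.mem_of_mem_head? hu)) huw (by omega)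
    exact ⟨x, hNu x hux, hwx⟩
  obtain ⟨m, hm, hperm⟩ :=
    exists_isChain_cons_perm_of_length_le_degree_add_degree hl hu hv hNu hNv (by omega) hxl
  simpa [hperm.length_eq] using hmax (w :: x :: m)
    ((hperm.nodup_iff.2 hnd).cons fun h => hw (hperm.subset h)) (hm.cons fun _ h => by simp_all)
end

section
/- Let G and H be finite simple graphs with H a subgraph of G, and let C be a proper coloring of G with color classes C_0, …, C_{L−1} (possibly empty). Then Span(G,H) ≤ L − 1 if and only if there exists such a coloring C for which the complement of the color adjacency graph of (C,G,H) has a hamilton path. -/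
/-!
A labeling with labels in `{0, …, L - 1}` is itself a proper colouring with `L` classes, and
labels `k` and `k + 1` are never joined by an edge of `H`, so `0, 1, …, L - 1` is a Hamiltonian
path in the complement of the colour adjacency graph. Conversely, labelling every vertex by the
position of its colour class along such a path is a `(G,H)`-labeling: classes joined by an edge
of `H` are not consecutive on the path, so their positions differ by at least 2.
-/

open SimpleGraph

/-- A `(G,H)`-labeling of the pair `H ⊆ G` with labels in `{0, …, t}`:
edges of `H` get labels differing by at least 2, and edges of `G` not in `H`
get labels differing by at least 1. -/
def IsGHLabeling {V : Type*} (G H : SimpleGraph V) (t : ℕ) (φ : V → ℤ) : Prop :=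
  (∀ v, 0 ≤ φ v ∧ φ v ≤ (t : ℤ)) ∧
  (∀ u v, H.Adj u v → 2 ≤ |φ u - φ v|) ∧
  (∀ u v, G.Adj u v → ¬ H.Adj u v → 1 ≤ |φ u - φ v|)

/-- `Span(G,H)`: the least `t` admitting a `(G,H)`-labeling. -/
noncomputable def spanGH {V : Type*} (G H : SimpleGraph V) : ℕ :=
  sInf {t | ∃ φ : V → ℤ, IsGHLabeling G H t φ}

/-- The color adjacency graph of a coloring `c` of `G` with `L` classes (with respect to the
weight-2 subgraph `H`): classes are adjacent iff joined by an edge of `H`. -/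
def colorAdjGraph {V : Type*} {L : ℕ} (H : SimpleGraph V) (c : V → Fin L) :
    SimpleGraph (Fin L) where
  Adj i j := i ≠ j ∧ ∃ u v, H.Adj u v ∧ c u = i ∧ c v = j
  symm := by
    constructor
    rintro i j ⟨hne, u, v, h, hu, hv⟩
    exact ⟨hne.symm, v, u, h.symm, hv, hu⟩
  loopless := by constructor; rintro i ⟨hne, -⟩; exact hne rfl

section Labeling

variable {V : Type*} {G H : SimpleGraph V} {t : ℕ} {φ : V → ℤ}

theorem IsGHLabeling.mono {t' : ℕ} (hφ : IsGHLabeling G H t φ) (htt' : t ≤ t') :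
    IsGHLabeling G H t' φ :=
  ⟨fun v => ⟨(hφ.1 v).1, (hφ.1 v).2.trans (by exact_mod_cast htt')⟩, hφ.2⟩

theorem IsGHLabeling.ne_of_adj (hφ : IsGHLabeling G H t φ) {u v : V} (huv : G.Adj u v) :
    φ u ≠ φ v := by
  intro h
  by_cases hH : H.Adj u v
  · simpa [h] using hφ.2.1 u v hH
  · simpa [h] using hφ.2.2 u v huv hH

variable (G H) in
theorem exists_isGHLabeling [Finite V] : ∃ t φ, IsGHLabeling G H t φ := by
  obtain ⟨n, ⟨e⟩⟩ := Finite.exists_equiv_fin V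
  have hgap : ∀ u v, u ≠ v → 2 ≤ |2 * ((e u : ℕ) : ℤ) - 2 * (e v : ℕ)| := by
    intro u v huv
    have : (e u : ℕ) ≠ e v := fun h => huv (e.injective (Fin.ext h))
    rcases abs_cases (2 * ((e u : ℕ) : ℤ) - 2 * (e v : ℕ)) with ⟨h, _⟩ | ⟨h, _⟩ <;> omega
  refine ⟨2 * n, fun v => 2 * (e v : ℕ), fun v => ?_, fun u v huv => hgap u v huv.ne,
    fun u v huv _ => (hgap u v huv.ne).trans' one_le_two⟩
  have := (e v).isLt
  constructor <;> push_cast <;> omega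

theorem spanGH_le_iff [Finite V] : spanGH G H ≤ t ↔ ∃ φ, IsGHLabeling G H t φ := by
  constructor
  · intro ht
    obtain ⟨φ, hφ⟩ := Nat.sInf_mem (exists_isGHLabeling G H)
    exact ⟨φ, hφ.mono ht⟩
  · rintro ⟨φ, hφ⟩
    exact Nat.sInf_le ⟨φ, hφ⟩

end Labeling

namespace SimpleGraph

theorem isChain_finRange_pathGraph (n : ℕ) : (List.finRange n).IsChain (pathGraph n).Adj := by
  simp [List.isChain_iff_getElem, pathGraph_adj]

theorem exists_isHamiltonian_of_pathGraph_le {n : ℕ} {G : SimpleGraph (Fin (n + 1))}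
    (h : pathGraph (n + 1) ≤ G) : ∃ (i j : Fin (n + 1)) (p : G.Walk i j), p.IsHamiltonian :=
  ⟨_, _, Walk.ofSupport _ (by simp) ((isChain_finRange_pathGraph _).imp fun _ _ hab => h hab),
    fun a => by simp⟩

namespace Walk

variable {α : Type*} [DecidableEq α] {G : SimpleGraph α} {a b x y : α}

theorem adj_of_idxOf_add_one_eq (p : G.Walk a b) (hx : x ∈ p.support) (hy : y ∈ p.support)
    (h : p.support.idxOf x + 1 = p.support.idxOf y) : G.Adj x y := by
  have hlt : p.support.idxOf x < p.length := by
    have := List.idxOf_lt_length_of_mem hy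
    rw [length_support] at this
    omega
  simpa [h, p.getVert_support_idxOf hx, p.getVert_support_idxOf hy] using p.adj_getVert_succ hlt

theorem IsHamiltonian.idxOf_ne {p : G.Walk a b} (hp : p.IsHamiltonian) (hxy : x ≠ y) :
    p.support.idxOf x ≠ p.support.idxOf y :=
  fun h => hxy ((List.idxOf_inj (hp.mem_support x)).1 h)

theorem IsHamiltonian.one_le_abs_sub_idxOf {p : G.Walk a b} (hp : p.IsHamiltonian)
    (hxy : x ≠ y) : 1 ≤ |(p.support.idxOf x : ℤ) - p.support.idxOf y| := by
  have := hp.idxOf_ne hxy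
  rcases abs_cases ((p.support.idxOf x : ℤ) - p.support.idxOf y) with ⟨h, _⟩ | ⟨h, _⟩ <;> omega

theorem IsHamiltonian.two_le_abs_sub_idxOf_of_adj {p : Gᶜ.Walk a b} (hp : p.IsHamiltonian)
    (hxy : G.Adj x y) : 2 ≤ |(p.support.idxOf x : ℤ) - p.support.idxOf y| := by
  have hne := hp.idxOf_ne hxy.ne
  have hx := hp.mem_support x
  have hy := hp.mem_support y
  by_contra! hlt
  rw [abs_sub_lt_iff] at hlt
  rcases Nat.lt_or_gt_of_ne hne with h | h
  · exact (p.adj_of_idxOf_add_one_eq hx hy (by omega)).2 hxy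
  · exact (p.adj_of_idxOf_add_one_eq hy hx (by omega)).2 hxy.symm

end Walk

end SimpleGraph

section ColorAdjGraph

variable {V : Type*} {G H : SimpleGraph V} {n : ℕ}

theorem IsGHLabeling.exists_coloring_isHamiltonian {φ : V → ℤ}
    (hφ : IsGHLabeling G H n φ) :
    ∃ c : V → Fin (n + 1), (∀ u v, G.Adj u v → c u ≠ c v) ∧
      ∃ (i j : Fin (n + 1)) (p : (colorAdjGraph H c)ᶜ.Walk i j), p.IsHamiltonian := by
  let c : V → Fin (n + 1) := fun v => ⟨(φ v).toNat, by have := hφ.1 v; omega⟩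
  have hcφ : ∀ v, ((c v : ℕ) : ℤ) = φ v := fun v => Int.toNat_of_nonneg (hφ.1 v).1
  refine ⟨c, fun u v huv hc => hφ.ne_of_adj huv ?_, exists_isHamiltonian_of_pathGraph_le ?_⟩
  · rw [← hcφ, ← hcφ, hc]
  · intro i j hij
    refine ⟨hij.ne, ?_⟩
    rintro ⟨-, u, v, hH, rfl, rfl⟩
    have h2 := hφ.2.1 u v hH
    rw [← hcφ, ← hcφ] at h2
    rw [pathGraph_adj] at hij
    rcases abs_cases (((c u : ℕ) : ℤ) - (c v : ℕ)) with ⟨h, _⟩ | ⟨h, _⟩ <;> omega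

theorem isGHLabeling_idxOf_of_isHamiltonian (hHG : H ≤ G) {c : V → Fin (n + 1)}
    (hc : ∀ u v, G.Adj u v → c u ≠ c v) {i j : Fin (n + 1)}
    {p : (colorAdjGraph H c)ᶜ.Walk i j} (hp : p.IsHamiltonian) :
    IsGHLabeling G H n fun v => (p.support.idxOf (c v) : ℤ) := by
  refine ⟨fun v => ⟨by positivity, ?_⟩, fun u v huv => ?_, fun u v huv _ => ?_⟩
  · have := List.idxOf_lt_length_of_mem (hp.mem_support (c v))
    rw [hp.length_support, Fintype.card_fin] at this
    dsimp only
    omega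
  · exact hp.two_le_abs_sub_idxOf_of_adj ⟨hc u v (hHG huv), u, v, huv, rfl, rfl⟩
  · exact hp.one_le_abs_sub_idxOf (hc u v huv)

end ColorAdjGraph

theorem spanGH_le_iff_hamiltonPath_general {V : Type*} [Fintype V]
    (G H : SimpleGraph V) (hHG : H ≤ G) (L : ℕ) (hL : 1 ≤ L) :
    spanGH G H ≤ L - 1 ↔
    ∃ c : V → Fin L, (∀ u v, G.Adj u v → c u ≠ c v) ∧
      ∃ (i j : Fin L) (p : (colorAdjGraph H c)ᶜ.Walk i j), p.IsHamiltonian := by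
  obtain ⟨n, rfl⟩ := Nat.exists_eq_add_of_le' hL
  rw [Nat.add_sub_cancel, spanGH_le_iff]
  constructor
  · rintro ⟨φ, hφ⟩
    exact hφ.exists_coloring_isHamiltonian
  · rintro ⟨c, hc, i, j, p, hp⟩
    exact ⟨_, isGHLabeling_idxOf_of_isHamiltonian hHG hc hp⟩

theorem spanGH_le_iff_hamiltonPath {V : Type*} [Fintype V] [DecidableEq V]
    (G H : SimpleGraph V) (hHG : H ≤ G) (L : ℕ) (hL : 1 ≤ L) :
    spanGH G H ≤ L - 1 ↔
    ∃ c : V → Fin L, (∀ u v, G.Adj u v → c u ≠ c v) ∧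
      ∃ (i j : Fin L) (p : (colorAdjGraph H c)ᶜ.Walk i j), p.IsHamiltonian :=
  spanGH_le_iff_hamiltonPath_general G H hHG L hL
end
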